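/- Let 0 < γ < 1, let a < b, c < d, and for positive integers M_x, M_y set h_x = (b − a)/M_x, h_y = (d − c)/M_y, with grid points x_{l/2} = a + l h_x/2 and y_{r/2} = c + r h_y/2 and piecewise quadratic basis functions φ_{l/2} (in x) and φ_{r/2} (in y). Then for every point (x*, y*) ∈ [a, b] × [c, d], Σ_{l=1}^{2M_x−1} Σ_{r=1}^{2M_y−1} |∫_c^d ∫_a^b φ_{l/2}(x̄) φ_{r/2}(ȳ) ((x* − x̄)² + (y* − ȳ)²)^{−γ/2} dx̄ dȳ| ≤ 18 (b − a)(d − c)^{1−γ}/(1 − γ). -/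

import Mathlib

open MeasureTheory intervalIntegral

/-- The piecewise quadratic Lagrange basis function attached to the node
`a + l·h/2` of the grid with integer nodes `a + k·h` and half-integer midpoints. -/
noncomputable def quadBasis (a h : ℝ) (l : ℕ) (x : ℝ) : ℝ :=
  if l % 2 = 1 then
    if a + ((l : ℝ) - 1) * h / 2 ≤ x ∧ x ≤ a + ((l : ℝ) + 1) * h / 2 then
      4 * (x - (a + ((l : ℝ) - 1) * h / 2)) * ((a + ((l : ℝ) + 1) * h / 2) - x) / h ^ 2
    else 0
  else
    if a + ((l : ℝ) - 2) * h / 2 ≤ x ∧ x ≤ a + (l : ℝ) * h / 2 then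
      (x - (a + ((l : ℝ) - 2) * h / 2)) *
        (2 * x - ((a + (l : ℝ) * h / 2) + (a + ((l : ℝ) - 2) * h / 2))) / h ^ 2
    else if a + (l : ℝ) * h / 2 ≤ x ∧ x ≤ a + ((l : ℝ) + 2) * h / 2 then
      ((a + ((l : ℝ) + 2) * h / 2) - x) *
        (((a + ((l : ℝ) + 2) * h / 2) + (a + (l : ℝ) * h / 2)) - 2 * x) / h ^ 2
    else 0

lemma quadBasis_abs_le_one {a h : ℝ} (hh : 0 < h) (l : ℕ) (x : ℝ) :
    |quadBasis a h l x| ≤ 1 := by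
  have h2 : (0:ℝ) < h ^ 2 := by positivity
  rw [abs_le]
  unfold quadBasis
  split_ifs with h1 hc1 hc2 hc3
  · obtain ⟨u1, u2⟩ := hc1
    constructor
    · rw [le_div_iff₀ h2] ; nlinarith
    · rw [div_le_iff₀ h2]
      nlinarith [sq_nonneg (2 * x - (a + ((l:ℝ) - 1) * h / 2) - (a + ((l:ℝ) + 1) * h / 2))]
  · norm_num
  · obtain ⟨u1, u2⟩ := hc2
    constructor
    · rw [le_div_iff₀ h2]
      nlinarith [sq_nonneg (4 * (x - (a + ((l:ℝ) - 2) * h / 2)) - h)]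
    · rw [div_le_iff₀ h2] ; nlinarith
  · obtain ⟨u1, u2⟩ := hc3
    constructor
    · rw [le_div_iff₀ h2]
      nlinarith [sq_nonneg (4 * ((a + ((l:ℝ) + 2) * h / 2) - x) - h)]
    · rw [div_le_iff₀ h2] ; nlinarith
  · norm_num

lemma quadBasis_measurable (a h : ℝ) (l : ℕ) : Measurable (quadBasis a h l) := by
  unfold quadBasis
  by_cases hl : l % 2 = 1 <;> simp only [hl, if_true, if_false, reduceIte] <;>
    refine Measurable.ite measurableSet_Icc (by fun_prop) ?_ <;>
    try exact Measurable.ite measurableSet_Icc (by fun_prop) measurable_const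
  exact measurable_const

lemma quadBasis_nonzero_mem {a h : ℝ} (l : ℕ) (x : ℝ) (hne : quadBasis a h l x ≠ 0) :
    (l % 2 = 1 ∧ a + ((l : ℝ) - 1) * h / 2 ≤ x ∧ x ≤ a + ((l : ℝ) + 1) * h / 2) ∨
    (l % 2 = 0 ∧ a + ((l : ℝ) - 2) * h / 2 ≤ x ∧ x ≤ a + ((l : ℝ) + 2) * h / 2) := by
  unfold quadBasis at hne
  split_ifs at hne with h1 hc1 hc2 hc3
  · exact Or.inl ⟨h1, hc1⟩
  · exact absurd rfl hne
  · exact Or.inr ⟨Nat.mod_two_ne_one.mp h1, hc2.1, by nlinarith [hc2.2]⟩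
  · exact Or.inr ⟨Nat.mod_two_ne_one.mp h1, by nlinarith [hc3.1], hc3.2⟩
  · exact absurd rfl hne

lemma sum_abs_quadBasis_le {a h : ℝ} (hh : 0 < h) (M : ℕ) (x : ℝ)
    (hxg : ∀ k : ℤ, x ≠ a + k * h / 2) :
    ∑ l ∈ Finset.Icc 1 (2 * M - 1), |quadBasis a h l x| ≤ 3 := by
  set t : ℝ := 2 * (x - a) / h with ht
  set n : ℤ := ⌊t⌋ with hn
  have htne : ∀ k : ℤ, t ≠ k := by
    intro k hk
    refine hxg k ?_
    have : 2 * (x - a) = k * h := by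
      rw [ht] at hk
      field_simp at hk
      linarith
    linarith
  have hn1 : (n : ℝ) < t := (Int.floor_le t).lt_of_ne (Ne.symm (htne n))
  have hn2 : t < (n : ℝ) + 1 := Int.lt_floor_add_one t
  set S : Finset ℤ := {n, n + 1, if n % 2 = 0 then n + 2 else n - 1} with hS
  have hcard : S.card ≤ 3 := by
    refine le_trans (Finset.card_insert_le _ _) ?_
    have := Finset.card_insert_le (n+1) ({if n % 2 = 0 then n + 2 else n - 1} : Finset ℤ)
    simp at this ⊢; omega
  have hmem : ∀ l : ℕ, quadBasis a h l x ≠ 0 → (l : ℤ) ∈ S := by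
    intro l hne
    have key : ((l:ℤ) % 2 = 1 ∧ n ≤ l ∧ (l:ℤ) ≤ n + 1) ∨
        ((l:ℤ) % 2 = 0 ∧ n - 1 ≤ l ∧ (l:ℤ) ≤ n + 2) := by
      rcases quadBasis_nonzero_mem l x hne with ⟨hp, h1, h2⟩ | ⟨hp, h1, h2⟩
      · have e1 : ((l:ℝ) - 1) ≤ t := by rw [ht, le_div_iff₀ hh]; linarith
        have e2 : t ≤ (l:ℝ) + 1 := by rw [ht, div_le_iff₀ hh]; linarith
        have f1 : ((l:ℤ):ℝ) < (n:ℝ) + 2 := by push_cast; push_cast at e1; linarith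
        have f2 : (n:ℝ) < ((l:ℤ):ℝ) + 1 := by push_cast; push_cast at e2; linarith
        have g1 : (l:ℤ) < n + 2 := by exact_mod_cast f1
        have g2 : n < (l:ℤ) + 1 := by exact_mod_cast f2
        exact Or.inl ⟨by omega, by omega, by omega⟩
      · have e1 : ((l:ℝ) - 2) ≤ t := by rw [ht, le_div_iff₀ hh]; linarith
        have e2 : t ≤ (l:ℝ) + 2 := by rw [ht, div_le_iff₀ hh]; linarith
        have f1 : ((l:ℤ):ℝ) < (n:ℝ) + 3 := by push_cast; push_cast at e1; linarith
        have f2 : (n:ℝ) < ((l:ℤ):ℝ) + 2 := by push_cast; push_cast at e2; linarith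
        have g1 : (l:ℤ) < n + 3 := by exact_mod_cast f1
        have g2 : n < (l:ℤ) + 2 := by exact_mod_cast f2
        exact Or.inr ⟨by omega, by omega, by omega⟩
    have : (l:ℤ) = n ∨ (l:ℤ) = n + 1 ∨ (l:ℤ) = (if n % 2 = 0 then n + 2 else n - 1) := by
      by_cases hn0 : n % 2 = 0 <;> simp [hn0] <;> omega
    simp only [hS, Finset.mem_insert, Finset.mem_singleton]
    tauto
  classical
  calc ∑ l ∈ Finset.Icc 1 (2 * M - 1), |quadBasis a h l x|
      = ∑ l ∈ (Finset.Icc 1 (2 * M - 1)).filter (fun l => quadBasis a h l x ≠ 0),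
          |quadBasis a h l x| := by
        rw [Finset.sum_filter_of_ne]
        intro l _ hne
        simp only [ne_eq, abs_eq_zero] at hne ⊢
        exact fun hc => hne (by rw [hc])
    _ ≤ ∑ l ∈ (Finset.Icc 1 (2 * M - 1)).filter (fun l => quadBasis a h l x ≠ 0), 1 := by
        refine Finset.sum_le_sum fun l _ => quadBasis_abs_le_one hh l x
    _ = ((Finset.Icc 1 (2 * M - 1)).filter (fun l => quadBasis a h l x ≠ 0)).card := by
        simp
    _ ≤ (S.card : ℝ) := by
        have hc := Finset.card_le_card_of_injOn
          (s := (Finset.Icc 1 (2 * M - 1)).filter (fun l => quadBasis a h l x ≠ 0))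
          (t := S) (fun l : ℕ => (l : ℤ))
          (fun l hl => hmem l (Finset.mem_filter.mp hl).2)
          (fun l₁ _ l₂ _ hl => Nat.cast_injective hl)
        exact_mod_cast hc
    _ ≤ 3 := by exact_mod_cast hcard

lemma ae_not_grid (a h : ℝ) (μ : Measure ℝ) [NullSingletonClass μ] :
    ∀ᵐ x ∂μ, ∀ k : ℤ, x ≠ a + k * h / 2 := by
  rw [ae_iff]
  refine measure_mono_null (fun x hx => ?_) ((Set.countable_range
    (fun k : ℤ => a + k * h / 2)).measure_zero μ)
  push_neg at hx
  obtain ⟨k, hk⟩ := hx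
  exact ⟨k, hk.symm⟩

lemma measurable_absRpow (ys γ : ℝ) : Measurable (fun y : ℝ => |y - ys| ^ (-γ)) := by
  fun_prop

lemma aux_right {γ : ℝ} (hr : (-1:ℝ) < -γ) (ys p q : ℝ) (hp : ys ≤ p) (hq : ys ≤ q) :
    IntervalIntegrable (fun y : ℝ => |y - ys| ^ (-γ)) volume p q := by
  have hg : IntervalIntegrable (fun y : ℝ => (y - ys) ^ (-γ)) volume p q := by
    simpa using (intervalIntegrable_rpow' hr (a := p - ys) (b := q - ys)).comp_sub_right ys
  refine hg.mono_fun' ((measurable_absRpow ys γ).aestronglyMeasurable) ?_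
  filter_upwards [ae_restrict_mem measurableSet_uIoc] with y hy
  have hy1 : ys < y := lt_of_le_of_lt (le_min hp hq) hy.1
  rw [Real.norm_eq_abs, abs_of_nonneg (Real.rpow_nonneg (abs_nonneg _) _),
    abs_of_pos (by linarith : (0:ℝ) < y - ys)]

lemma aux_left {γ : ℝ} (hr : (-1:ℝ) < -γ) (ys p q : ℝ) (hp : p ≤ ys) (hq : q ≤ ys) :
    IntervalIntegrable (fun y : ℝ => |y - ys| ^ (-γ)) volume p q := by
  have hg : IntervalIntegrable (fun y : ℝ => (ys - y) ^ (-γ)) volume p q := by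
    simpa using (intervalIntegrable_rpow' hr (a := ys - p) (b := ys - q)).comp_sub_left ys
  refine hg.mono_fun' ((measurable_absRpow ys γ).aestronglyMeasurable) ?_
  filter_upwards [ae_restrict_mem measurableSet_uIoc] with y hy
  have hy1 : y ≤ ys := le_trans hy.2 (max_le hp hq)
  rw [Real.norm_eq_abs, abs_of_nonneg (Real.rpow_nonneg (abs_nonneg _) _),
    abs_of_nonpos (by linarith : y - ys ≤ 0)]
  rw [neg_sub]

lemma absRpow_intervalIntegrable {γ : ℝ} (hr : (-1:ℝ) < -γ) (ys c d : ℝ) :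
    IntervalIntegrable (fun y : ℝ => |y - ys| ^ (-γ)) volume c d := by
  have h1 : IntervalIntegrable (fun y : ℝ => |y - ys| ^ (-γ)) volume c ys := by
    rcases le_total c ys with h | h
    · exact aux_left hr ys c ys h le_rfl
    · exact aux_right hr ys c ys h le_rfl
  have h2 : IntervalIntegrable (fun y : ℝ => |y - ys| ^ (-γ)) volume ys d := by
    rcases le_total ys d with h | h
    · exact aux_right hr ys ys d le_rfl h
    · exact aux_left hr ys ys d le_rfl h
  exact h1.trans h2

lemma integral_absRpow_le {γ c d ys : ℝ} (hγ0 : 0 < γ) (hγ1 : γ < 1)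
    (h1 : c ≤ ys) (h2 : ys ≤ d) (hcd : c < d) :
    ∫ y in c..d, |y - ys| ^ (-γ) ≤ 2 * (d - c) ^ (1 - γ) / (1 - γ) := by
  have hr : (-1:ℝ) < -γ := by linarith
  have hsplit : (∫ y in c..ys, |y - ys| ^ (-γ)) + (∫ y in ys..d, |y - ys| ^ (-γ))
      = ∫ y in c..d, |y - ys| ^ (-γ) :=
    integral_add_adjacent_intervals (absRpow_intervalIntegrable hr ys c ys)
      (absRpow_intervalIntegrable hr ys ys d)
  have hR : (∫ y in ys..d, |y - ys| ^ (-γ)) = (d - ys) ^ (1 - γ) / (1 - γ) := by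
    have hcg : (∫ y in ys..d, |y - ys| ^ (-γ)) = ∫ y in ys..d, (y - ys) ^ (-γ) := by
      refine integral_congr fun y hy => ?_
      rw [Set.uIcc_of_le h2] at hy
      rw [abs_of_nonneg (by linarith [hy.1] : (0:ℝ) ≤ y - ys)]
    rw [hcg, integral_comp_sub_right (fun u => u ^ (-γ)) ys, sub_self,
      integral_rpow (Or.inl hr), Real.zero_rpow (by linarith : -γ + 1 ≠ 0)]
    ring_nf
  have hL : (∫ y in c..ys, |y - ys| ^ (-γ)) = (ys - c) ^ (1 - γ) / (1 - γ) := by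
    have hcg : (∫ y in c..ys, |y - ys| ^ (-γ)) = ∫ y in c..ys, (ys - y) ^ (-γ) := by
      refine integral_congr fun y hy => ?_
      rw [Set.uIcc_of_le h1] at hy
      rw [abs_of_nonpos (by linarith [hy.2] : y - ys ≤ 0), neg_sub]
    rw [hcg, integral_comp_sub_left (fun u => u ^ (-γ)) ys, sub_self,
      integral_rpow (Or.inl hr), Real.zero_rpow (by linarith : -γ + 1 ≠ 0)]
    ring_nf
  have hb1 : (ys - c) ^ (1 - γ) ≤ (d - c) ^ (1 - γ) :=
    Real.rpow_le_rpow (by linarith) (by linarith) (by linarith)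
  have hb2 : (d - ys) ^ (1 - γ) ≤ (d - c) ^ (1 - γ) :=
    Real.rpow_le_rpow (by linarith) (by linarith) (by linarith)
  have h1γ : (0:ℝ) < 1 - γ := by linarith
  rw [← hsplit, hR, hL]
  rw [← add_div, div_le_div_iff₀ h1γ h1γ]
  nlinarith

lemma kernel_le {γ xs ys x y : ℝ} (hγ0 : 0 < γ) (hy : y ≠ ys) :
    ((xs - x) ^ 2 + (ys - y) ^ 2) ^ (-γ / 2) ≤ |y - ys| ^ (-γ) := by
  have h0 : (0:ℝ) < (ys - y) ^ 2 := by
    have : ys - y ≠ 0 := sub_ne_zero.mpr (Ne.symm hy)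
    positivity
  have h1 : ((xs - x) ^ 2 + (ys - y) ^ 2) ^ (-γ / 2) ≤ ((ys - y) ^ 2) ^ (-γ / 2) :=
    Real.rpow_le_rpow_of_nonpos h0 (by nlinarith [sq_nonneg (xs - x)]) (by linarith)
  refine h1.trans_eq ?_
  rw [← sq_abs, abs_sub_comm, ← Real.rpow_natCast |y - ys| 2, ← Real.rpow_mul (abs_nonneg _)]
  ring_nf

/-- Row-sum bound for the two-dimensional collocation matrix with additive Cauchy
kernel: for every point `(x*, y*) ∈ [a,b] × [c,d]`, the sum over all interior basis
functions of the absolute values of their integrals against the kernel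
`((x* − x̄)² + (y* − ȳ)²)^{−γ/2}` is at most `18 (b − a)(d − c)^{1−γ}/(1 − γ)`. -/
theorem stmt16 (γ a b c d : ℝ) (hγ0 : 0 < γ) (hγ1 : γ < 1) (hab : a < b) (hcd : c < d)
    (Mx My : ℕ) (hMx : 1 ≤ Mx) (hMy : 1 ≤ My)
    (hx hy : ℝ) (hhx : hx = (b - a) / Mx) (hhy : hy = (d - c) / My)
    (xs ys : ℝ) (hxs : xs ∈ Set.Icc a b) (hys : ys ∈ Set.Icc c d) :
    ∑ l ∈ Finset.Icc 1 (2 * Mx - 1), ∑ r ∈ Finset.Icc 1 (2 * My - 1),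
      |∫ yb in c..d, ∫ xb in a..b,
          quadBasis a hx l xb * quadBasis c hy r yb *
            ((xs - xb) ^ 2 + (ys - yb) ^ 2) ^ (-γ / 2)| ≤
      18 * (b - a) * (d - c) ^ (1 - γ) / (1 - γ) := by
  have hr : (-1:ℝ) < -γ := by linarith
  have hhx0 : 0 < hx := by
    rw [hhx]
    exact div_pos (by linarith) (by exact_mod_cast hMx)
  have hhy0 : 0 < hy := by
    rw [hhy]
    exact div_pos (by linarith) (by exact_mod_cast hMy)
  set g : ℝ → ℝ := fun y => |y - ys| ^ (-γ) with hg
  set A : ℕ → ℝ := fun l => ∫ x in a..b, |quadBasis a hx l x| with hA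
  set B : ℕ → ℝ := fun r => ∫ y in c..d, |quadBasis c hy r y| * g y with hB
  -- basic integrability
  have intP : ∀ l, IntervalIntegrable (fun x => |quadBasis a hx l x|) volume a b := by
    intro l
    refine (_root_.intervalIntegrable_const (c := (1:ℝ))).mono_fun'
      ((quadBasis_measurable a hx l).abs.aestronglyMeasurable) ?_
    refine Filter.Eventually.of_forall fun x => ?_
    simpa [abs_abs] using quadBasis_abs_le_one hhx0 l x
  have intg : IntervalIntegrable g volume c d := absRpow_intervalIntegrable hr ys c d
  have intQ : ∀ r, IntervalIntegrable (fun y => |quadBasis c hy r y| * g y) volume c d := by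
    intro r
    refine intg.mono_fun'
      (((quadBasis_measurable c hy r).abs.mul (measurable_absRpow ys γ)).aestronglyMeasurable) ?_
    refine Filter.Eventually.of_forall fun y => ?_
    have hg0 : 0 ≤ g y := Real.rpow_nonneg (abs_nonneg _) _
    have hq1 : |quadBasis c hy r y| ≤ 1 := quadBasis_abs_le_one hhy0 r y
    show ‖|quadBasis c hy r y| * g y‖ ≤ g y
    rw [Real.norm_eq_abs, abs_of_nonneg (mul_nonneg (abs_nonneg _) hg0)]
    nlinarith
  have hA_nonneg : ∀ l, 0 ≤ A l := fun l =>
    integral_nonneg hab.le (fun x _ => abs_nonneg _)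
  have hB_nonneg : ∀ r, 0 ≤ B r := fun r =>
    integral_nonneg hcd.le (fun y _ =>
      mul_nonneg (abs_nonneg _) (Real.rpow_nonneg (abs_nonneg _) _))
  -- Step 1: termwise bound
  have term_le : ∀ l r,
      |∫ yb in c..d, ∫ xb in a..b,
          quadBasis a hx l xb * quadBasis c hy r yb *
            ((xs - xb) ^ 2 + (ys - yb) ^ 2) ^ (-γ / 2)| ≤ A l * B r := by
    intro l r
    have inner_le : ∀ y : ℝ, y ≠ ys →
        |∫ xb in a..b, quadBasis a hx l xb * quadBasis c hy r y *
            ((xs - xb) ^ 2 + (ys - y) ^ 2) ^ (-γ / 2)|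
          ≤ A l * (|quadBasis c hy r y| * g y) := by
      intro y hyne
      have hrw : (∫ xb in a..b, quadBasis a hx l xb * quadBasis c hy r y *
            ((xs - xb) ^ 2 + (ys - y) ^ 2) ^ (-γ / 2))
          = quadBasis c hy r y * ∫ xb in a..b, quadBasis a hx l xb *
            ((xs - xb) ^ 2 + (ys - y) ^ 2) ^ (-γ / 2) := by
        rw [← intervalIntegral.integral_const_mul]
        refine integral_congr fun x _ => by ring
      rw [hrw, abs_mul]
      have hbound : |∫ xb in a..b, quadBasis a hx l xb *
            ((xs - xb) ^ 2 + (ys - y) ^ 2) ^ (-γ / 2)| ≤ A l * g y := by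
        have hgb : IntervalIntegrable (fun x => |quadBasis a hx l x| * g y) volume a b :=
          (intP l).mul_const (g y)
        have := intervalIntegral.norm_integral_le_of_norm_le (μ := volume) (a := a) (b := b)
          (f := fun xb => quadBasis a hx l xb * ((xs - xb) ^ 2 + (ys - y) ^ 2) ^ (-γ / 2))
          (g := fun x => |quadBasis a hx l x| * g y)
          hab.le (Filter.Eventually.of_forall fun x _ => ?_) hgb
        · rw [← Real.norm_eq_abs]
          refine this.trans_eq ?_
          have hg0 : 0 ≤ g y := Real.rpow_nonneg (abs_nonneg _) _
          rw [intervalIntegral.integral_mul_const]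
        · rw [Real.norm_eq_abs, abs_mul]
          have hK0 : 0 ≤ ((xs - x) ^ 2 + (ys - y) ^ 2) ^ (-γ / 2) :=
            Real.rpow_nonneg (by positivity) _
          rw [abs_of_nonneg hK0]
          exact mul_le_mul_of_nonneg_left (kernel_le hγ0 hyne) (abs_nonneg _)
      calc |quadBasis c hy r y| * |∫ xb in a..b, quadBasis a hx l xb *
            ((xs - xb) ^ 2 + (ys - y) ^ 2) ^ (-γ / 2)|
          ≤ |quadBasis c hy r y| * (A l * g y) :=
            mul_le_mul_of_nonneg_left hbound (abs_nonneg _)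
        _ = A l * (|quadBasis c hy r y| * g y) := by ring
    have houter : IntervalIntegrable (fun y => A l * (|quadBasis c hy r y| * g y))
        volume c d := (intQ r).const_mul (A l)
    have hae : ∀ᵐ y ∂(volume.restrict (Set.uIoc c d)), y ≠ ys := by
      refine Filter.Eventually.filter_mono (ae_mono Measure.restrict_le_self) ?_
      rw [ae_iff]
      simpa using measure_singleton ys
    have := intervalIntegral.norm_integral_le_of_norm_le (μ := volume) (a := c) (b := d)
      (f := fun yb => ∫ xb in a..b, quadBasis a hx l xb * quadBasis c hy r yb *
            ((xs - xb) ^ 2 + (ys - yb) ^ 2) ^ (-γ / 2))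
      (g := fun y => A l * (|quadBasis c hy r y| * g y))
      hcd.le ((ae_restrict_iff' measurableSet_Ioc).mp ((by rw [Set.uIoc_of_le hcd.le] at hae; exact hae :
        ∀ᵐ y ∂(volume.restrict (Set.Ioc c d)), y ≠ ys).mono fun y hy => by
        rw [Real.norm_eq_abs]; exact inner_le y hy)) houter
    rw [← Real.norm_eq_abs]
    refine this.trans_eq ?_
    rw [intervalIntegral.integral_const_mul]
  -- Step 2: sum the bilinear bounds
  have sum_le : ∑ l ∈ Finset.Icc 1 (2 * Mx - 1), ∑ r ∈ Finset.Icc 1 (2 * My - 1),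
      |∫ yb in c..d, ∫ xb in a..b,
          quadBasis a hx l xb * quadBasis c hy r yb *
            ((xs - xb) ^ 2 + (ys - yb) ^ 2) ^ (-γ / 2)|
      ≤ (∑ l ∈ Finset.Icc 1 (2 * Mx - 1), A l) *
        (∑ r ∈ Finset.Icc 1 (2 * My - 1), B r) := by
    rw [Finset.sum_mul_sum]
    exact Finset.sum_le_sum fun l _ => Finset.sum_le_sum fun r _ => term_le l r
  -- Step 3: bound the A-sum
  have sumA_le : (∑ l ∈ Finset.Icc 1 (2 * Mx - 1), A l) ≤ 3 * (b - a) := by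
    have hint : (∑ l ∈ Finset.Icc 1 (2 * Mx - 1), A l)
        = ∫ x in a..b, ∑ l ∈ Finset.Icc 1 (2 * Mx - 1), |quadBasis a hx l x| :=
      (intervalIntegral.integral_finset_sum (fun l _ => intP l)).symm
    rw [hint]
    have hintsum : IntervalIntegrable
        (fun x => ∑ l ∈ Finset.Icc 1 (2 * Mx - 1), |quadBasis a hx l x|) volume a b := by
      rw [← Finset.sum_fn]
      exact IntervalIntegrable.sum _ fun l _ => intP l
    have hmono := integral_mono_ae_restrict (μ := volume) (a := a) (b := b)
      (f := fun x => ∑ l ∈ Finset.Icc 1 (2 * Mx - 1), |quadBasis a hx l x|)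
      (g := fun _ => (3:ℝ)) hab.le hintsum
      (_root_.intervalIntegrable_const (c := (3:ℝ)))
      (Filter.Eventually.filter_mono (ae_mono Measure.restrict_le_self)
        ((ae_not_grid a hx volume).mono fun x hxg =>
          sum_abs_quadBasis_le hhx0 Mx x hxg))
    refine hmono.trans_eq ?_
    rw [intervalIntegral.integral_const]
    simp [mul_comm]
  -- Step 4: bound the B-sum
  have sumB_le : (∑ r ∈ Finset.Icc 1 (2 * My - 1), B r)
      ≤ 3 * (2 * (d - c) ^ (1 - γ) / (1 - γ)) := by
    have hint : (∑ r ∈ Finset.Icc 1 (2 * My - 1), B r)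
        = ∫ y in c..d, ∑ r ∈ Finset.Icc 1 (2 * My - 1), |quadBasis c hy r y| * g y :=
      (intervalIntegral.integral_finset_sum (fun r _ => intQ r)).symm
    rw [hint]
    have hintsum : IntervalIntegrable
        (fun y => ∑ r ∈ Finset.Icc 1 (2 * My - 1), |quadBasis c hy r y| * g y) volume c d := by
      rw [← Finset.sum_fn]
      exact IntervalIntegrable.sum _ fun r _ => intQ r
    have hmono := integral_mono_ae_restrict (μ := volume) (a := c) (b := d)
      (f := fun y => ∑ r ∈ Finset.Icc 1 (2 * My - 1), |quadBasis c hy r y| * g y)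
      (g := fun y => 3 * g y) hcd.le hintsum
      (intg.const_mul 3)
      (Filter.Eventually.filter_mono (ae_mono Measure.restrict_le_self)
        ((ae_not_grid c hy volume).mono fun y hyg => by
          have hsum := sum_abs_quadBasis_le hhy0 My y hyg
          have hg0 : 0 ≤ g y := Real.rpow_nonneg (abs_nonneg _) _
          calc ∑ r ∈ Finset.Icc 1 (2 * My - 1), |quadBasis c hy r y| * g y
              = (∑ r ∈ Finset.Icc 1 (2 * My - 1), |quadBasis c hy r y|) * g y := by
                rw [Finset.sum_mul]
            _ ≤ 3 * g y := mul_le_mul_of_nonneg_right hsum hg0))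
    refine hmono.trans ?_
    rw [intervalIntegral.integral_const_mul]
    have := integral_absRpow_le hγ0 hγ1 hys.1 hys.2 hcd
    nlinarith [this]
  -- combine
  have h1γ : (0:ℝ) < 1 - γ := by linarith
  have hrhs_nonneg : 0 ≤ 2 * (d - c) ^ (1 - γ) / (1 - γ) := by
    have : (0:ℝ) ≤ (d - c) ^ (1 - γ) := Real.rpow_nonneg (by linarith) _
    positivity
  have hAs : 0 ≤ ∑ l ∈ Finset.Icc 1 (2 * Mx - 1), A l :=
    Finset.sum_nonneg fun l _ => hA_nonneg l
  have hBs : 0 ≤ ∑ r ∈ Finset.Icc 1 (2 * My - 1), B r :=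
    Finset.sum_nonneg fun r _ => hB_nonneg r
  refine sum_le.trans ?_
  have hfinal : (∑ l ∈ Finset.Icc 1 (2 * Mx - 1), A l) *
      (∑ r ∈ Finset.Icc 1 (2 * My - 1), B r)
      ≤ (3 * (b - a)) * (3 * (2 * (d - c) ^ (1 - γ) / (1 - γ))) :=
    mul_le_mul sumA_le sumB_le hBs (by linarith)
  refine hfinal.trans_eq ?_
  field_simp
  ring
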